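/- Let ε ∈ ℂ with ε² + ε + 1 = 0. In R = MvPolynomial (Fin 3) ℂ with variables x, y, z, let P₁,…,P₁₂ be the twelve ideals P₁=(y,z), P₂=(x,z), P₃=(x,y), P₄=(x−z, y−z), P₅=(y−εx, z−ε²x), P₆=(y−ε²x, z−εx), P₇=(x−εz, y−z), P₈=(x−z, y−εz), P₉=(y−x, z−εx), P₁₀=(x−ε²z, y−z), P₁₁=(x−z, y−ε²z), P₁₂=(y−x, z−ε²x). Then P₁ ∩ P₂ ∩ ⋯ ∩ P₁₂ = Ideal.span {z·(x³ − y³), x·(y³ − z³), y·(x³ − z³)}. -/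
import Mathlib

open MvPolynomial

/-- The vanishing ideals of the twelve points of the dual Hesse configuration,
in `MvPolynomial (Fin 3) ℂ` with `x = X 0`, `y = X 1`, `z = X 2`. -/
noncomputable def P (ε : ℂ) : Fin 12 → Ideal (MvPolynomial (Fin 3) ℂ) :=
  fun i =>
    let x : MvPolynomial (Fin 3) ℂ := X 0
    let y : MvPolynomial (Fin 3) ℂ := X 1
    let z : MvPolynomial (Fin 3) ℂ := X 2
    match i with
    | 0 => Ideal.span {y, z}
    | 1 => Ideal.span {x, z}
    | 2 => Ideal.span {x, y}
    | 3 => Ideal.span {x - z, y - z}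
    | 4 => Ideal.span {y - C ε * x, z - C ε ^ 2 * x}
    | 5 => Ideal.span {y - C ε ^ 2 * x, z - C ε * x}
    | 6 => Ideal.span {x - C ε * z, y - z}
    | 7 => Ideal.span {x - z, y - C ε * z}
    | 8 => Ideal.span {y - x, z - C ε * x}
    | 9 => Ideal.span {x - C ε ^ 2 * z, y - z}
    | 10 => Ideal.span {x - z, y - C ε ^ 2 * z}
    | 11 => Ideal.span {y - x, z - C ε ^ 2 * x}

private lemma solve3 {S : Type*} [CommRing S] [IsDomain S] [CharZero S]
    {η v0 v1 v2 : S} (hη : η ^ 2 + η + 1 = 0)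
    (h1 : v0 + v1 + v2 = 0)
    (h2 : v0 + η * v1 + η ^ 2 * v2 = 0)
    (h3 : v0 + η ^ 2 * v1 + (η ^ 2) ^ 2 * v2 = 0) :
    v0 = 0 ∧ v1 = 0 ∧ v2 = 0 := by
  have h30 : (3 : S) ≠ 0 := by
    have := (Nat.cast_ne_zero (R := S)).mpr (show 3 ≠ 0 by norm_num)
    simpa using this
  have hcube : η ^ 3 = 1 := by linear_combination (η - 1) * hη
  have e0 : (3 : S) * v0 = 0 := by
    linear_combination h1 + h2 + h3 - (v1 + (η ^ 2 - η + 1) * v2) * hη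
  have e1 : (3 : S) * v1 = 0 := by
    linear_combination h1 + η ^ 2 * h2 + η * h3 - v0 * hη - (2 * v1 + (η ^ 2 + η) * v2) * hcube - v2 * hη
  have e2 : (3 : S) * v2 = 0 := by
    linear_combination h1 + η * h2 + η ^ 2 * h3 - v0 * hη - (η * v1 + (2 + η ^ 3) * v2) * hcube - v1 * hη
  exact ⟨(mul_eq_zero.mp e0).resolve_left h30,
         (mul_eq_zero.mp e1).resolve_left h30,
         (mul_eq_zero.mp e2).resolve_left h30⟩

private noncomputable def emb : Polynomial ℂ →ₐ[ℂ] MvPolynomial (Fin 3) ℂ :=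
  Polynomial.aeval (X 2)

private noncomputable def G (c : Fin 3 → Fin 3 → Polynomial ℂ) : MvPolynomial (Fin 3) ℂ :=
  ∑ i : Fin 3, ∑ j : Fin 3, emb (c i j) * X 0 ^ (i : ℕ) * X 1 ^ (j : ℕ)

private lemma div_lemma (f : MvPolynomial (Fin 3) ℂ) :
    ∃ c : Fin 3 → Fin 3 → Polynomial ℂ,
      f - G c ∈ Ideal.span {(X 0 ^ 3 - X 2 ^ 3 : MvPolynomial (Fin 3) ℂ), X 1 ^ 3 - X 2 ^ 3} := by
  set I : Ideal (MvPolynomial (Fin 3) ℂ) :=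
    Ideal.span {(X 0 ^ 3 - X 2 ^ 3 : MvPolynomial (Fin 3) ℂ), X 1 ^ 3 - X 2 ^ 3} with hI
  induction f using MvPolynomial.induction_on with
  | C a =>
      refine ⟨fun i j => if i = 0 ∧ j = 0 then Polynomial.C a else 0, ?_⟩
      have : G (fun i j => if i = 0 ∧ j = 0 then Polynomial.C a else 0) = C a := by
        simp [G, Fin.sum_univ_three, emb]
      rw [this, sub_self]
      exact Ideal.zero_mem I
  | add p q hp hq =>
      obtain ⟨cp, hcp⟩ := hp
      obtain ⟨cq, hcq⟩ := hq
      refine ⟨cp + cq, ?_⟩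
      have hG : G (cp + cq) = G cp + G cq := by
        simp [G, map_add, add_mul, Finset.sum_add_distrib]
      rw [hG, show p + q - (G cp + G cq) = (p - G cp) + (q - G cq) by ring]
      exact Ideal.add_mem I hcp hcq
  | mul_X p n hp =>
      obtain ⟨c, hc⟩ := hp
      have key : ∃ c', G c * X n - G c' ∈ I := by
        fin_cases n
        · refine ⟨![![Polynomial.X ^ 3 * c 2 0, Polynomial.X ^ 3 * c 2 1, Polynomial.X ^ 3 * c 2 2],
              ![c 0 0, c 0 1, c 0 2], ![c 1 0, c 1 1, c 1 2]], ?_⟩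
          show G c * X 0 - G _ ∈ I
          have h2 : G c * X 0 - G ![![Polynomial.X ^ 3 * c 2 0, Polynomial.X ^ 3 * c 2 1, Polynomial.X ^ 3 * c 2 2],
              ![c 0 0, c 0 1, c 0 2], ![c 1 0, c 1 1, c 1 2]] =
              (emb (c 2 0) + emb (c 2 1) * X 1 + emb (c 2 2) * X 1 ^ 2) * (X 0 ^ 3 - X 2 ^ 3) := by
            simp only [G, Fin.sum_univ_three, emb, map_mul, Polynomial.aeval_X_pow,
              Polynomial.aeval_X, Matrix.cons_val_zero, Matrix.cons_val_one, Matrix.head_cons,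
              Matrix.cons_val_two, Matrix.tail_cons, Matrix.head_fin_const, Fin.val_zero,
              Fin.val_one, Fin.val_two, pow_zero, pow_one]
            ring
          rw [h2]
          exact Ideal.mul_mem_left I _ (Ideal.subset_span (by simp))
        · refine ⟨![![Polynomial.X ^ 3 * c 0 2, c 0 0, c 0 1],
              ![Polynomial.X ^ 3 * c 1 2, c 1 0, c 1 1], ![Polynomial.X ^ 3 * c 2 2, c 2 0, c 2 1]], ?_⟩
          show G c * X 1 - G _ ∈ I
          have h2 : G c * X 1 - G ![![Polynomial.X ^ 3 * c 0 2, c 0 0, c 0 1],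
              ![Polynomial.X ^ 3 * c 1 2, c 1 0, c 1 1], ![Polynomial.X ^ 3 * c 2 2, c 2 0, c 2 1]] =
              (emb (c 0 2) + emb (c 1 2) * X 0 + emb (c 2 2) * X 0 ^ 2) * (X 1 ^ 3 - X 2 ^ 3) := by
            simp only [G, Fin.sum_univ_three, emb, map_mul, Polynomial.aeval_X_pow,
              Polynomial.aeval_X, Matrix.cons_val_zero, Matrix.cons_val_one, Matrix.head_cons,
              Matrix.cons_val_two, Matrix.tail_cons, Matrix.head_fin_const, Fin.val_zero,
              Fin.val_one, Fin.val_two, pow_zero, pow_one]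
            ring
          rw [h2]
          exact Ideal.mul_mem_left I _ (Ideal.subset_span (by simp))
        · refine ⟨fun i j => Polynomial.X * c i j, ?_⟩
          show G c * X 2 - G _ ∈ I
          have h2 : G c * X 2 - G (fun i j => Polynomial.X * c i j) = 0 := by
            simp only [G, Fin.sum_univ_three, emb, map_mul, Polynomial.aeval_X,
              Fin.val_zero, Fin.val_one, Fin.val_two, pow_zero, pow_one]
            ring
          rw [h2]
          exact Ideal.zero_mem I
      obtain ⟨c', hc'⟩ := key
      refine ⟨c', ?_⟩
      rw [show p * X n - G c' = (p - G c) * X n + (G c * X n - G c') by ring]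
      exact Ideal.add_mem I (Ideal.mul_mem_right _ I hc) hc'

/-- substitution `x ↦ a·t, y ↦ b·t, z ↦ t`. -/
private noncomputable def φ (a b : ℂ) : MvPolynomial (Fin 3) ℂ →ₐ[ℂ] Polynomial ℂ :=
  aeval ![Polynomial.C a * Polynomial.X, Polynomial.C b * Polynomial.X, Polynomial.X]

private lemma phi_emb (a b : ℂ) (p : Polynomial ℂ) : φ a b (emb p) = p := by
  rw [emb, ← Polynomial.aeval_algHom_apply]
  simp [φ]

private lemma phi_G (a b : ℂ) (c : Fin 3 → Fin 3 → Polynomial ℂ) :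
    φ a b (G c) =
      c 0 0 + Polynomial.C b * Polynomial.X * c 0 1 + Polynomial.C b ^ 2 * Polynomial.X ^ 2 * c 0 2 +
      Polynomial.C a * Polynomial.X *
        (c 1 0 + Polynomial.C b * Polynomial.X * c 1 1 + Polynomial.C b ^ 2 * Polynomial.X ^ 2 * c 1 2) +
      Polynomial.C a ^ 2 * Polynomial.X ^ 2 *
        (c 2 0 + Polynomial.C b * Polynomial.X * c 2 1 + Polynomial.C b ^ 2 * Polynomial.X ^ 2 * c 2 2) := by
  have h : ∀ p i j, φ a b (emb p * X 0 ^ i * X 1 ^ j) =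
      p * (Polynomial.C a * Polynomial.X) ^ i * (Polynomial.C b * Polynomial.X) ^ j := by
    intro p i j
    rw [map_mul, map_mul, map_pow, map_pow, phi_emb]
    simp [φ]
  simp only [G, Fin.sum_univ_three, Fin.val_zero, Fin.val_one, Fin.val_two, map_add, h]
  ring

private lemma kill_pair {S : Type*} [CommSemiring S] [Algebra ℂ S]
    (ψ : MvPolynomial (Fin 3) ℂ →ₐ[ℂ] S) {p q f : MvPolynomial (Fin 3) ℂ}
    (hp : ψ p = 0) (hq : ψ q = 0) (hf : f ∈ Ideal.span {p, q}) : ψ f = 0 := by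
  obtain ⟨u, v, h⟩ := Ideal.mem_span_pair.mp hf
  rw [← h, map_add, map_mul, map_mul, hp, hq, mul_zero, mul_zero, add_zero]

private lemma sub_aeval_mem (I : Ideal (MvPolynomial (Fin 3) ℂ))
    (v : Fin 3 → MvPolynomial (Fin 3) ℂ) (hv : ∀ n, X n - v n ∈ I)
    (p : MvPolynomial (Fin 3) ℂ) : p - aeval v p ∈ I := by
  induction p using MvPolynomial.induction_on with
  | C a =>
      have : (C a : MvPolynomial (Fin 3) ℂ) - aeval v (C a) = 0 := by
        simp [MvPolynomial.algebraMap_eq]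
      rw [this]; exact I.zero_mem
  | add p q hp hq =>
      rw [map_add, show p + q - (aeval v p + aeval v q) = (p - aeval v p) + (q - aeval v q) by ring]
      exact I.add_mem hp hq
  | mul_X p n hp =>
      rw [map_mul, aeval_X,
        show p * X n - aeval v p * v n = (p - aeval v p) * X n + aeval v p * (X n - v n) by ring]
      exact I.add_mem (I.mul_mem_right _ hp) (I.mul_mem_left _ (hv n))

private lemma mem_span_triple {S : Type*} [CommRing S] {a b c x y z w : S}
    (h : a * x + b * y + c * z = w) : w ∈ Ideal.span {x, y, z} := by
  rw [← h]
  exact add_mem (add_mem (Ideal.mul_mem_left _ _ (Ideal.subset_span (by simp)))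
    (Ideal.mul_mem_left _ _ (Ideal.subset_span (by simp))))
    (Ideal.mul_mem_left _ _ (Ideal.subset_span (by simp)))

set_option maxHeartbeats 2000000 in
theorem I_eq_span (ε : ℂ) (hε : ε ^ 2 + ε + 1 = 0) :
    (⨅ i : Fin 12, P ε i) =
      Ideal.span {X 2 * (X 0 ^ 3 - X 1 ^ 3),
                  X 0 * (X 1 ^ 3 - X 2 ^ 3),
                  X 1 * (X 0 ^ 3 - X 2 ^ 3)} := by
  have hε3 : ε ^ 3 = 1 := by linear_combination (ε - 1) * hε
  have he2 : (ε ^ 2) ^ 3 = 1 := by rw [show (ε ^ 2) ^ 3 = (ε ^ 3) ^ 2 by ring, hε3, one_pow]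
  have hηq : (Polynomial.C ε : Polynomial ℂ) ^ 2 + Polynomial.C ε + 1 = 0 := by
    have := congrArg Polynomial.C hε
    simpa [map_add, map_pow] using this
  have hη3 : (Polynomial.C ε : Polynomial ℂ) ^ 3 = 1 := by
    linear_combination (Polynomial.C ε - 1) * hηq
  have hC : (C ε : MvPolynomial (Fin 3) ℂ) ^ 2 + C ε + 1 = 0 := by
    have := congrArg (C : ℂ → MvPolynomial (Fin 3) ℂ) hε
    simpa [map_add, map_pow] using this
  have hC3 : (C ε : MvPolynomial (Fin 3) ℂ) ^ 3 = 1 := by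
    linear_combination (C ε - 1) * hC
  apply le_antisymm
  · -- hard direction
    intro f hf
    rw [Ideal.mem_iInf] at hf
    have kill : ∀ a b : ℂ, a ^ 3 = 1 → b ^ 3 = 1 →
        φ a b (X 0 ^ 3 - X 2 ^ 3) = 0 ∧ φ a b (X 1 ^ 3 - X 2 ^ 3) = 0 := by
      intro a b ha hb
      constructor
      · simp only [φ, map_sub, map_pow, aeval_X, Matrix.cons_val_zero, Matrix.cons_val_one,
          Matrix.cons_val_two, Matrix.head_cons, Matrix.tail_cons]
        rw [mul_pow, ← map_pow, ha]
        simp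
      · simp only [φ, map_sub, map_pow, aeval_X, Matrix.cons_val_zero, Matrix.cons_val_one,
          Matrix.cons_val_two, Matrix.head_cons, Matrix.tail_cons]
        rw [mul_pow, ← map_pow, hb]
        simp
    obtain ⟨c, hc⟩ := div_lemma f
    have hGc : ∀ a b : ℂ, a ^ 3 = 1 → b ^ 3 = 1 → φ a b f = 0 → φ a b (G c) = 0 := by
      intro a b ha hb haf
      have h2 := kill_pair (φ a b) (kill a b ha hb).1 (kill a b ha hb).2 hc
      rw [map_sub, haf, zero_sub, neg_eq_zero] at h2
      exact h2
    have expandE : ∀ a b : ℂ, a ^ 3 = 1 → b ^ 3 = 1 → φ a b f = 0 →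
        c 0 0 + Polynomial.C b * Polynomial.X * c 0 1 +
          Polynomial.C b ^ 2 * Polynomial.X ^ 2 * c 0 2 +
        Polynomial.C a * Polynomial.X * (c 1 0 + Polynomial.C b * Polynomial.X * c 1 1 +
          Polynomial.C b ^ 2 * Polynomial.X ^ 2 * c 1 2) +
        Polynomial.C a ^ 2 * Polynomial.X ^ 2 * (c 2 0 + Polynomial.C b * Polynomial.X * c 2 1 +
          Polynomial.C b ^ 2 * Polynomial.X ^ 2 * c 2 2) = 0 := by
      intro a b ha hb h
      rw [← phi_G]
      exact hGc a b ha hb h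
    -- the nine vanishing statements
    have Ef11 : φ 1 1 f = 0 := by
      have h := hf 3
      rw [show P ε 3 = Ideal.span {X 0 - X 2, X 1 - X 2} from rfl] at h
      refine kill_pair _ ?_ ?_ h <;>
      · simp only [φ, map_sub, map_mul, map_pow, aeval_X, aeval_C, Matrix.cons_val_zero,
          Matrix.cons_val_one, Matrix.cons_val_two, Matrix.head_cons, Matrix.tail_cons, map_one]
        ring
    have Efee2 : φ ε (ε ^ 2) f = 0 := by
      have h := hf 4
      rw [show P ε 4 = Ideal.span {X 1 - C ε * X 0, X 2 - C ε ^ 2 * X 0} from rfl] at h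
      refine kill_pair _ ?_ ?_ h <;>
      · simp only [φ, map_sub, map_mul, map_pow, aeval_X, aeval_C, Matrix.cons_val_zero,
          Matrix.cons_val_one, Matrix.cons_val_two, Matrix.head_cons, Matrix.tail_cons,
          ← Polynomial.C_eq_algebraMap]
        first
        | ring1
        | linear_combination Polynomial.X * hη3
        | linear_combination (-Polynomial.X) * hη3
        | linear_combination Polynomial.C ε * Polynomial.X * hη3
        | linear_combination (-(Polynomial.C ε * Polynomial.X)) * hη3
    have Efe2e : φ (ε ^ 2) ε f = 0 := by
      have h := hf 5
      rw [show P ε 5 = Ideal.span {X 1 - C ε ^ 2 * X 0, X 2 - C ε * X 0} from rfl] at h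
      refine kill_pair _ ?_ ?_ h <;>
      · simp only [φ, map_sub, map_mul, map_pow, aeval_X, aeval_C, Matrix.cons_val_zero,
          Matrix.cons_val_one, Matrix.cons_val_two, Matrix.head_cons, Matrix.tail_cons,
          ← Polynomial.C_eq_algebraMap]
        first
        | ring1
        | linear_combination Polynomial.X * hη3
        | linear_combination (-Polynomial.X) * hη3
        | linear_combination Polynomial.C ε * Polynomial.X * hη3
        | linear_combination (-(Polynomial.C ε * Polynomial.X)) * hη3
    have Efe1 : φ ε 1 f = 0 := by
      have h := hf 6
      rw [show P ε 6 = Ideal.span {X 0 - C ε * X 2, X 1 - X 2} from rfl] at h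
      refine kill_pair _ ?_ ?_ h <;>
      · simp only [φ, map_sub, map_mul, map_pow, aeval_X, aeval_C, Matrix.cons_val_zero,
          Matrix.cons_val_one, Matrix.cons_val_two, Matrix.head_cons, Matrix.tail_cons,
          ← Polynomial.C_eq_algebraMap, map_one]
        ring
    have Ef1e : φ 1 ε f = 0 := by
      have h := hf 7
      rw [show P ε 7 = Ideal.span {X 0 - X 2, X 1 - C ε * X 2} from rfl] at h
      refine kill_pair _ ?_ ?_ h <;>
      · simp only [φ, map_sub, map_mul, map_pow, aeval_X, aeval_C, Matrix.cons_val_zero,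
          Matrix.cons_val_one, Matrix.cons_val_two, Matrix.head_cons, Matrix.tail_cons,
          ← Polynomial.C_eq_algebraMap, map_one]
        ring
    have Efe2e2 : φ (ε ^ 2) (ε ^ 2) f = 0 := by
      have h := hf 8
      rw [show P ε 8 = Ideal.span {X 1 - X 0, X 2 - C ε * X 0} from rfl] at h
      refine kill_pair _ ?_ ?_ h <;>
      · simp only [φ, map_sub, map_mul, map_pow, aeval_X, aeval_C, Matrix.cons_val_zero,
          Matrix.cons_val_one, Matrix.cons_val_two, Matrix.head_cons, Matrix.tail_cons,
          ← Polynomial.C_eq_algebraMap]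
        first
        | ring1
        | linear_combination Polynomial.X * hη3
        | linear_combination (-Polynomial.X) * hη3
        | linear_combination Polynomial.C ε * Polynomial.X * hη3
        | linear_combination (-(Polynomial.C ε * Polynomial.X)) * hη3
    have Efe21 : φ (ε ^ 2) 1 f = 0 := by
      have h := hf 9
      rw [show P ε 9 = Ideal.span {X 0 - C ε ^ 2 * X 2, X 1 - X 2} from rfl] at h
      refine kill_pair _ ?_ ?_ h <;>
      · simp only [φ, map_sub, map_mul, map_pow, aeval_X, aeval_C, Matrix.cons_val_zero,
          Matrix.cons_val_one, Matrix.cons_val_two, Matrix.head_cons, Matrix.tail_cons,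
          ← Polynomial.C_eq_algebraMap, map_one]
        ring
    have Ef1e2 : φ 1 (ε ^ 2) f = 0 := by
      have h := hf 10
      rw [show P ε 10 = Ideal.span {X 0 - X 2, X 1 - C ε ^ 2 * X 2} from rfl] at h
      refine kill_pair _ ?_ ?_ h <;>
      · simp only [φ, map_sub, map_mul, map_pow, aeval_X, aeval_C, Matrix.cons_val_zero,
          Matrix.cons_val_one, Matrix.cons_val_two, Matrix.head_cons, Matrix.tail_cons,
          ← Polynomial.C_eq_algebraMap, map_one]
        ring
    have Efee : φ ε ε f = 0 := by
      have h := hf 11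
      rw [show P ε 11 = Ideal.span {X 1 - X 0, X 2 - C ε ^ 2 * X 0} from rfl] at h
      refine kill_pair _ ?_ ?_ h <;>
      · simp only [φ, map_sub, map_mul, map_pow, aeval_X, aeval_C, Matrix.cons_val_zero,
          Matrix.cons_val_one, Matrix.cons_val_two, Matrix.head_cons, Matrix.tail_cons,
          ← Polynomial.C_eq_algebraMap]
        first
        | ring1
        | linear_combination Polynomial.X * hη3
        | linear_combination (-Polynomial.X) * hη3
        | linear_combination Polynomial.C ε * Polynomial.X * hη3
        | linear_combination (-(Polynomial.C ε * Polynomial.X)) * hη3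
    -- expanded equations
    have E11 := expandE 1 1 (one_pow 3) (one_pow 3) Ef11
    have E1e := expandE 1 ε (one_pow 3) hε3 Ef1e
    have E1e2 := expandE 1 (ε ^ 2) (one_pow 3) he2 Ef1e2
    have Ee1 := expandE ε 1 hε3 (one_pow 3) Efe1
    have Eee := expandE ε ε hε3 hε3 Efee
    have Eee2 := expandE ε (ε ^ 2) hε3 he2 Efee2
    have Ee21 := expandE (ε ^ 2) 1 he2 (one_pow 3) Efe21
    have Ee2e := expandE (ε ^ 2) ε he2 hε3 Efe2e
    have Ee2e2 := expandE (ε ^ 2) (ε ^ 2) he2 he2 Efe2e2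
    simp only [map_one, map_pow, one_mul, one_pow] at E11 E1e E1e2 Ee1 Eee Eee2 Ee21 Ee2e Ee2e2
    -- solve over a for each b
    have W1 : c 0 0 + Polynomial.X * c 0 1 + Polynomial.X ^ 2 * c 0 2 = 0 ∧
        Polynomial.X * (c 1 0 + Polynomial.X * c 1 1 + Polynomial.X ^ 2 * c 1 2) = 0 ∧
        Polynomial.X ^ 2 * (c 2 0 + Polynomial.X * c 2 1 + Polynomial.X ^ 2 * c 2 2) = 0 :=
      solve3 hηq (by linear_combination E11) (by linear_combination Ee1)
        (by linear_combination Ee21)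
    have We : c 0 0 + Polynomial.C ε * Polynomial.X * c 0 1 +
          Polynomial.C ε ^ 2 * Polynomial.X ^ 2 * c 0 2 = 0 ∧
        Polynomial.X * (c 1 0 + Polynomial.C ε * Polynomial.X * c 1 1 +
          Polynomial.C ε ^ 2 * Polynomial.X ^ 2 * c 1 2) = 0 ∧
        Polynomial.X ^ 2 * (c 2 0 + Polynomial.C ε * Polynomial.X * c 2 1 +
          Polynomial.C ε ^ 2 * Polynomial.X ^ 2 * c 2 2) = 0 :=
      solve3 hηq (by linear_combination E1e) (by linear_combination Eee)
        (by linear_combination Ee2e)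
    have We2 : c 0 0 + Polynomial.C ε ^ 2 * Polynomial.X * c 0 1 +
          (Polynomial.C ε ^ 2) ^ 2 * Polynomial.X ^ 2 * c 0 2 = 0 ∧
        Polynomial.X * (c 1 0 + Polynomial.C ε ^ 2 * Polynomial.X * c 1 1 +
          (Polynomial.C ε ^ 2) ^ 2 * Polynomial.X ^ 2 * c 1 2) = 0 ∧
        Polynomial.X ^ 2 * (c 2 0 + Polynomial.C ε ^ 2 * Polynomial.X * c 2 1 +
          (Polynomial.C ε ^ 2) ^ 2 * Polynomial.X ^ 2 * c 2 2) = 0 :=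
      solve3 hηq (by linear_combination E1e2) (by linear_combination Eee2)
        (by linear_combination Ee2e2)
    have hXne : (Polynomial.X : Polynomial ℂ) ≠ 0 := Polynomial.X_ne_zero
    have hX2ne : (Polynomial.X : Polynomial ℂ) ^ 2 ≠ 0 := pow_ne_zero 2 hXne
    have R10 := W1.1
    have R11 := (mul_eq_zero.mp W1.2.1).resolve_left hXne
    have R12 := (mul_eq_zero.mp W1.2.2).resolve_left hX2ne
    have Re0 := We.1
    have Re1 := (mul_eq_zero.mp We.2.1).resolve_left hXne
    have Re2 := (mul_eq_zero.mp We.2.2).resolve_left hX2ne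
    have Re20 := We2.1
    have Re21 := (mul_eq_zero.mp We2.2.1).resolve_left hXne
    have Re22 := (mul_eq_zero.mp We2.2.2).resolve_left hX2ne
    have K0 : c 0 0 = 0 ∧ Polynomial.X * c 0 1 = 0 ∧ Polynomial.X ^ 2 * c 0 2 = 0 :=
      solve3 hηq (by linear_combination R10) (by linear_combination Re0)
        (by linear_combination Re20)
    have K1 : c 1 0 = 0 ∧ Polynomial.X * c 1 1 = 0 ∧ Polynomial.X ^ 2 * c 1 2 = 0 :=
      solve3 hηq (by linear_combination R11) (by linear_combination Re1)
        (by linear_combination Re21)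
    have K2 : c 2 0 = 0 ∧ Polynomial.X * c 2 1 = 0 ∧ Polynomial.X ^ 2 * c 2 2 = 0 :=
      solve3 hηq (by linear_combination R12) (by linear_combination Re2)
        (by linear_combination Re22)
    have c00 := K0.1
    have c01 := (mul_eq_zero.mp K0.2.1).resolve_left hXne
    have c02 := (mul_eq_zero.mp K0.2.2).resolve_left hX2ne
    have c10 := K1.1
    have c11 := (mul_eq_zero.mp K1.2.1).resolve_left hXne
    have c12 := (mul_eq_zero.mp K1.2.2).resolve_left hX2ne
    have c20 := K2.1
    have c21 := (mul_eq_zero.mp K2.2.1).resolve_left hXne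
    have c22 := (mul_eq_zero.mp K2.2.2).resolve_left hX2ne
    have hGzero : G c = 0 := by
      simp [G, Fin.sum_univ_three, c00, c01, c02, c10, c11, c12, c20, c21, c22]
    rw [hGzero, sub_zero] at hc
    -- now f ∈ (A, B); use the three coordinate ideals
    obtain ⟨q1, q2, hq⟩ := Ideal.mem_span_pair.mp hc
    have hf0 : aeval (![X 0, 0, 0] : Fin 3 → MvPolynomial (Fin 3) ℂ) f = 0 := by
      have h := hf 0
      rw [show P ε 0 = Ideal.span {X 1, X 2} from rfl] at h
      exact kill_pair _ (by simp) (by simp) h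
    have hf1 : aeval (![0, X 1, 0] : Fin 3 → MvPolynomial (Fin 3) ℂ) f = 0 := by
      have h := hf 1
      rw [show P ε 1 = Ideal.span {X 0, X 2} from rfl] at h
      exact kill_pair _ (by simp) (by simp) h
    have hf2 : aeval (![0, 0, X 2] : Fin 3 → MvPolynomial (Fin 3) ℂ) f = 0 := by
      have h := hf 2
      rw [show P ε 2 = Ideal.span {X 0, X 1} from rfl] at h
      exact kill_pair _ (by simp) (by simp) h
    -- q1 ∈ (y, z)
    have hq0 := congrArg (aeval (![X 0, 0, 0] : Fin 3 → MvPolynomial (Fin 3) ℂ)) hq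
    simp only [map_add, map_mul, map_sub, map_pow, aeval_X, Matrix.cons_val_zero,
      Matrix.cons_val_one, Matrix.cons_val_two, Matrix.head_cons, Matrix.tail_cons, hf0] at hq0
    have hq1z : aeval (![X 0, 0, 0] : Fin 3 → MvPolynomial (Fin 3) ℂ) q1 = 0 := by
      have h4 : aeval (![X 0, 0, 0] : Fin 3 → MvPolynomial (Fin 3) ℂ) q1 * (X 0 : MvPolynomial (Fin 3) ℂ) ^ 3 = 0 := by
        linear_combination hq0
      exact (mul_eq_zero.mp h4).resolve_right (pow_ne_zero _ (X_ne_zero 0))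
    have hq1mem : q1 ∈ Ideal.span {(X 1 : MvPolynomial (Fin 3) ℂ), X 2} := by
      have h := sub_aeval_mem (Ideal.span {(X 1 : MvPolynomial (Fin 3) ℂ), X 2}) (![X 0, 0, 0] : Fin 3 → MvPolynomial (Fin 3) ℂ)
        (by
          intro n
          fin_cases n
          · show (X 0 - X 0 : MvPolynomial (Fin 3) ℂ) ∈ _
            rw [sub_self]; exact Ideal.zero_mem _
          · show (X 1 - 0 : MvPolynomial (Fin 3) ℂ) ∈ _
            rw [sub_zero]; exact Ideal.subset_span (Set.mem_insert _ _)
          · show (X 2 - 0 : MvPolynomial (Fin 3) ℂ) ∈ _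
            rw [sub_zero]; exact Ideal.subset_span (Set.mem_insert_of_mem _ rfl)) q1
      rwa [hq1z, sub_zero] at h
    obtain ⟨α, β, hq1e⟩ := Ideal.mem_span_pair.mp hq1mem
    -- q2 ∈ (x, z)
    have hqb := congrArg (aeval (![0, X 1, 0] : Fin 3 → MvPolynomial (Fin 3) ℂ)) hq
    simp only [map_add, map_mul, map_sub, map_pow, aeval_X, Matrix.cons_val_zero,
      Matrix.cons_val_one, Matrix.cons_val_two, Matrix.head_cons, Matrix.tail_cons, hf1] at hqb
    have hq2z : aeval (![0, X 1, 0] : Fin 3 → MvPolynomial (Fin 3) ℂ) q2 = 0 := by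
      have h4 : aeval (![0, X 1, 0] : Fin 3 → MvPolynomial (Fin 3) ℂ) q2 * (X 1 : MvPolynomial (Fin 3) ℂ) ^ 3 = 0 := by
        linear_combination hqb
      exact (mul_eq_zero.mp h4).resolve_right (pow_ne_zero _ (X_ne_zero 1))
    have hq2mem : q2 ∈ Ideal.span {(X 0 : MvPolynomial (Fin 3) ℂ), X 2} := by
      have h := sub_aeval_mem (Ideal.span {(X 0 : MvPolynomial (Fin 3) ℂ), X 2}) (![0, X 1, 0] : Fin 3 → MvPolynomial (Fin 3) ℂ)
        (by
          intro n
          fin_cases n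
          · show (X 0 - 0 : MvPolynomial (Fin 3) ℂ) ∈ _
            rw [sub_zero]; exact Ideal.subset_span (Set.mem_insert _ _)
          · show (X 1 - X 1 : MvPolynomial (Fin 3) ℂ) ∈ _
            rw [sub_self]; exact Ideal.zero_mem _
          · show (X 2 - 0 : MvPolynomial (Fin 3) ℂ) ∈ _
            rw [sub_zero]; exact Ideal.subset_span (Set.mem_insert_of_mem _ rfl)) q2
      rwa [hq2z, sub_zero] at h
    obtain ⟨γ, δ, hq2e⟩ := Ideal.mem_span_pair.mp hq2mem
    -- β + δ ∈ (x, y)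
    have hqc := congrArg (aeval (![0, 0, X 2] : Fin 3 → MvPolynomial (Fin 3) ℂ)) hq
    simp only [map_add, map_mul, map_sub, map_pow, aeval_X, Matrix.cons_val_zero,
      Matrix.cons_val_one, Matrix.cons_val_two, Matrix.head_cons, Matrix.tail_cons, hf2] at hqc
    have e1 := congrArg (aeval (![0, 0, X 2] : Fin 3 → MvPolynomial (Fin 3) ℂ)) hq1e
    simp only [map_add, map_mul, aeval_X, Matrix.cons_val_zero, Matrix.cons_val_one,
      Matrix.cons_val_two, Matrix.head_cons, Matrix.tail_cons, mul_zero, zero_add] at e1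
    have e2 := congrArg (aeval (![0, 0, X 2] : Fin 3 → MvPolynomial (Fin 3) ℂ)) hq2e
    simp only [map_add, map_mul, aeval_X, Matrix.cons_val_zero, Matrix.cons_val_one,
      Matrix.cons_val_two, Matrix.head_cons, Matrix.tail_cons, mul_zero, zero_add] at e2
    have hbd0 : aeval (![0, 0, X 2] : Fin 3 → MvPolynomial (Fin 3) ℂ) (β + δ) = 0 := by
      have h4 : (aeval (![0, 0, X 2] : Fin 3 → MvPolynomial (Fin 3) ℂ) β + aeval (![0, 0, X 2] : Fin 3 → MvPolynomial (Fin 3) ℂ) δ) *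
          (X 2 : MvPolynomial (Fin 3) ℂ) ^ 4 = 0 := by
        linear_combination (X 2 : MvPolynomial (Fin 3) ℂ) ^ 3 * e1 +
          (X 2 : MvPolynomial (Fin 3) ℂ) ^ 3 * e2 - hqc
      rw [map_add]
      exact (mul_eq_zero.mp h4).resolve_right (pow_ne_zero _ (X_ne_zero 2))
    have hbdmem : β + δ ∈ Ideal.span {(X 0 : MvPolynomial (Fin 3) ℂ), X 1} := by
      have h := sub_aeval_mem (Ideal.span {(X 0 : MvPolynomial (Fin 3) ℂ), X 1}) (![0, 0, X 2] : Fin 3 → MvPolynomial (Fin 3) ℂ)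
        (by
          intro n
          fin_cases n
          · show (X 0 - 0 : MvPolynomial (Fin 3) ℂ) ∈ _
            rw [sub_zero]; exact Ideal.subset_span (Set.mem_insert _ _)
          · show (X 1 - 0 : MvPolynomial (Fin 3) ℂ) ∈ _
            rw [sub_zero]; exact Ideal.subset_span (Set.mem_insert_of_mem _ rfl)
          · show (X 2 - X 2 : MvPolynomial (Fin 3) ℂ) ∈ _
            rw [sub_self]; exact Ideal.zero_mem _) (β + δ)
      rwa [hbd0, sub_zero] at h
    obtain ⟨u, v, hbd⟩ := Ideal.mem_span_pair.mp hbdmem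
    refine mem_span_triple (a := β - v * X 1) (b := γ + u * X 2) (c := α + v * X 2) ?_
    linear_combination hq + (X 0 ^ 3 - X 2 ^ 3 : MvPolynomial (Fin 3) ℂ) * hq1e +
      (X 1 ^ 3 - X 2 ^ 3 : MvPolynomial (Fin 3) ℂ) * hq2e +
      (X 2 * (X 1 ^ 3 - X 2 ^ 3) : MvPolynomial (Fin 3) ℂ) * hbd
  · -- easy direction
    have hgsub : ∀ I : Ideal (MvPolynomial (Fin 3) ℂ),
        (X 0 ^ 3 - X 2 ^ 3 : MvPolynomial (Fin 3) ℂ) ∈ I →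
        (X 1 ^ 3 - X 2 ^ 3 : MvPolynomial (Fin 3) ℂ) ∈ I →
        Ideal.span {X 2 * (X 0 ^ 3 - X 1 ^ 3), X 0 * (X 1 ^ 3 - X 2 ^ 3),
          X 1 * (X 0 ^ 3 - X 2 ^ 3)} ≤ I := by
      intro I h1 h2
      rw [Ideal.span_le]
      rintro g hg
      simp only [Set.mem_insert_iff, Set.mem_singleton_iff] at hg
      rcases hg with rfl | rfl | rfl
      · rw [show (X 2 * (X 0 ^ 3 - X 1 ^ 3) : MvPolynomial (Fin 3) ℂ) =
            X 2 * (X 0 ^ 3 - X 2 ^ 3) - X 2 * (X 1 ^ 3 - X 2 ^ 3) by ring]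
        exact sub_mem (I.mul_mem_left _ h1) (I.mul_mem_left _ h2)
      · exact I.mul_mem_left _ h2
      · exact I.mul_mem_left _ h1
    have h0 : Ideal.span {X 2 * (X 0 ^ 3 - X 1 ^ 3), X 0 * (X 1 ^ 3 - X 2 ^ 3),
        X 1 * (X 0 ^ 3 - X 2 ^ 3)} ≤ P ε 0 := by
      rw [show P ε 0 = Ideal.span {X 1, X 2} from rfl, Ideal.span_le]
      rintro g hg
      simp only [Set.mem_insert_iff, Set.mem_singleton_iff] at hg
      rcases hg with rfl | rfl | rfl
      · exact Ideal.mem_span_pair.mpr ⟨0, X 0 ^ 3 - X 1 ^ 3, by ring⟩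
      · exact Ideal.mem_span_pair.mpr ⟨X 0 * X 1 ^ 2, -(X 0 * X 2 ^ 2), by ring⟩
      · exact Ideal.mem_span_pair.mpr ⟨X 0 ^ 3 - X 2 ^ 3, 0, by ring⟩
    have h1 : Ideal.span {X 2 * (X 0 ^ 3 - X 1 ^ 3), X 0 * (X 1 ^ 3 - X 2 ^ 3),
        X 1 * (X 0 ^ 3 - X 2 ^ 3)} ≤ P ε 1 := by
      rw [show P ε 1 = Ideal.span {X 0, X 2} from rfl, Ideal.span_le]
      rintro g hg
      simp only [Set.mem_insert_iff, Set.mem_singleton_iff] at hg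
      rcases hg with rfl | rfl | rfl
      · exact Ideal.mem_span_pair.mpr ⟨X 2 * X 0 ^ 2, -X 1 ^ 3, by ring⟩
      · exact Ideal.mem_span_pair.mpr ⟨X 1 ^ 3 - X 2 ^ 3, 0, by ring⟩
      · exact Ideal.mem_span_pair.mpr ⟨X 1 * X 0 ^ 2, -(X 1 * X 2 ^ 2), by ring⟩
    have h2 : Ideal.span {X 2 * (X 0 ^ 3 - X 1 ^ 3), X 0 * (X 1 ^ 3 - X 2 ^ 3),
        X 1 * (X 0 ^ 3 - X 2 ^ 3)} ≤ P ε 2 := by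
      rw [show P ε 2 = Ideal.span {X 0, X 1} from rfl, Ideal.span_le]
      rintro g hg
      simp only [Set.mem_insert_iff, Set.mem_singleton_iff] at hg
      rcases hg with rfl | rfl | rfl
      · exact Ideal.mem_span_pair.mpr ⟨X 2 * X 0 ^ 2, -(X 2 * X 1 ^ 2), by ring⟩
      · exact Ideal.mem_span_pair.mpr ⟨X 1 ^ 3 - X 2 ^ 3, 0, by ring⟩
      · exact Ideal.mem_span_pair.mpr ⟨0, X 0 ^ 3 - X 2 ^ 3, by ring⟩
    have h3 : Ideal.span {X 2 * (X 0 ^ 3 - X 1 ^ 3), X 0 * (X 1 ^ 3 - X 2 ^ 3),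
        X 1 * (X 0 ^ 3 - X 2 ^ 3)} ≤ P ε 3 := by
      refine hgsub _ ?_ ?_ <;> rw [show P ε 3 = Ideal.span {X 0 - X 2, X 1 - X 2} from rfl]
      · exact Ideal.mem_span_pair.mpr ⟨X 0 ^ 2 + X 0 * X 2 + X 2 ^ 2, 0, by ring⟩
      · exact Ideal.mem_span_pair.mpr ⟨0, X 1 ^ 2 + X 1 * X 2 + X 2 ^ 2, by ring⟩
    have h4 : Ideal.span {X 2 * (X 0 ^ 3 - X 1 ^ 3), X 0 * (X 1 ^ 3 - X 2 ^ 3),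
        X 1 * (X 0 ^ 3 - X 2 ^ 3)} ≤ P ε 4 := by
      refine hgsub _ ?_ ?_ <;>
        rw [show P ε 4 = Ideal.span {X 1 - C ε * X 0, X 2 - C ε ^ 2 * X 0} from rfl]
      · exact Ideal.mem_span_pair.mpr ⟨0,
          -(X 2 ^ 2 + C ε ^ 2 * X 0 * X 2 + C ε * X 0 ^ 2),
          by linear_combination (X 0 ^ 2 * X 2 * C ε + X 0 ^ 3) * hC3⟩
      · exact Ideal.mem_span_pair.mpr ⟨X 1 ^ 2 + C ε * X 0 * X 1 + C ε ^ 2 * X 0 ^ 2,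
          -(X 2 ^ 2 + C ε ^ 2 * X 0 * X 2 + C ε * X 0 ^ 2),
          by linear_combination (X 0 ^ 2 * X 2 * C ε) * hC3⟩
    have h5 : Ideal.span {X 2 * (X 0 ^ 3 - X 1 ^ 3), X 0 * (X 1 ^ 3 - X 2 ^ 3),
        X 1 * (X 0 ^ 3 - X 2 ^ 3)} ≤ P ε 5 := by
      refine hgsub _ ?_ ?_ <;>
        rw [show P ε 5 = Ideal.span {X 1 - C ε ^ 2 * X 0, X 2 - C ε * X 0} from rfl]
      · exact Ideal.mem_span_pair.mpr ⟨0,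
          -(X 2 ^ 2 + C ε * X 0 * X 2 + C ε ^ 2 * X 0 ^ 2),
          by linear_combination (X 0 ^ 3) * hC3⟩
      · exact Ideal.mem_span_pair.mpr ⟨X 1 ^ 2 + C ε ^ 2 * X 0 * X 1 + C ε * X 0 ^ 2,
          -(X 2 ^ 2 + C ε * X 0 * X 2 + C ε ^ 2 * X 0 ^ 2),
          by linear_combination (-(X 0 ^ 2 * X 1 * C ε)) * hC3⟩
    have h6 : Ideal.span {X 2 * (X 0 ^ 3 - X 1 ^ 3), X 0 * (X 1 ^ 3 - X 2 ^ 3),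
        X 1 * (X 0 ^ 3 - X 2 ^ 3)} ≤ P ε 6 := by
      refine hgsub _ ?_ ?_ <;>
        rw [show P ε 6 = Ideal.span {X 0 - C ε * X 2, X 1 - X 2} from rfl]
      · exact Ideal.mem_span_pair.mpr ⟨X 0 ^ 2 + C ε * X 2 * X 0 + C ε ^ 2 * X 2 ^ 2, 0,
          by linear_combination (-(X 2 ^ 3)) * hC3⟩
      · exact Ideal.mem_span_pair.mpr ⟨0, X 1 ^ 2 + X 1 * X 2 + X 2 ^ 2, by ring⟩
    have h7 : Ideal.span {X 2 * (X 0 ^ 3 - X 1 ^ 3), X 0 * (X 1 ^ 3 - X 2 ^ 3),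
        X 1 * (X 0 ^ 3 - X 2 ^ 3)} ≤ P ε 7 := by
      refine hgsub _ ?_ ?_ <;>
        rw [show P ε 7 = Ideal.span {X 0 - X 2, X 1 - C ε * X 2} from rfl]
      · exact Ideal.mem_span_pair.mpr ⟨X 0 ^ 2 + X 0 * X 2 + X 2 ^ 2, 0, by ring⟩
      · exact Ideal.mem_span_pair.mpr ⟨0, X 1 ^ 2 + C ε * X 2 * X 1 + C ε ^ 2 * X 2 ^ 2,
          by linear_combination (-(X 2 ^ 3)) * hC3⟩
    have h8 : Ideal.span {X 2 * (X 0 ^ 3 - X 1 ^ 3), X 0 * (X 1 ^ 3 - X 2 ^ 3),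
        X 1 * (X 0 ^ 3 - X 2 ^ 3)} ≤ P ε 8 := by
      refine hgsub _ ?_ ?_ <;>
        rw [show P ε 8 = Ideal.span {X 1 - X 0, X 2 - C ε * X 0} from rfl]
      · exact Ideal.mem_span_pair.mpr ⟨0,
          -(X 2 ^ 2 + C ε * X 0 * X 2 + C ε ^ 2 * X 0 ^ 2),
          by linear_combination (X 0 ^ 3) * hC3⟩
      · exact Ideal.mem_span_pair.mpr ⟨X 1 ^ 2 + X 0 * X 1 + X 0 ^ 2,
          -(X 2 ^ 2 + C ε * X 0 * X 2 + C ε ^ 2 * X 0 ^ 2),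
          by linear_combination (X 0 ^ 3) * hC3⟩
    have h9 : Ideal.span {X 2 * (X 0 ^ 3 - X 1 ^ 3), X 0 * (X 1 ^ 3 - X 2 ^ 3),
        X 1 * (X 0 ^ 3 - X 2 ^ 3)} ≤ P ε 9 := by
      refine hgsub _ ?_ ?_ <;>
        rw [show P ε 9 = Ideal.span {X 0 - C ε ^ 2 * X 2, X 1 - X 2} from rfl]
      · exact Ideal.mem_span_pair.mpr ⟨X 0 ^ 2 + C ε ^ 2 * X 2 * X 0 + C ε * X 2 ^ 2, 0,
          by linear_combination (-(X 2 ^ 3) - X 0 * X 2 ^ 2 * C ε) * hC3⟩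
      · exact Ideal.mem_span_pair.mpr ⟨0, X 1 ^ 2 + X 1 * X 2 + X 2 ^ 2, by ring⟩
    have h10 : Ideal.span {X 2 * (X 0 ^ 3 - X 1 ^ 3), X 0 * (X 1 ^ 3 - X 2 ^ 3),
        X 1 * (X 0 ^ 3 - X 2 ^ 3)} ≤ P ε 10 := by
      refine hgsub _ ?_ ?_ <;>
        rw [show P ε 10 = Ideal.span {X 0 - X 2, X 1 - C ε ^ 2 * X 2} from rfl]
      · exact Ideal.mem_span_pair.mpr ⟨X 0 ^ 2 + X 0 * X 2 + X 2 ^ 2, 0, by ring⟩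
      · exact Ideal.mem_span_pair.mpr ⟨0, X 1 ^ 2 + C ε ^ 2 * X 2 * X 1 + C ε * X 2 ^ 2,
          by linear_combination (-(X 2 ^ 3) - X 1 * X 2 ^ 2 * C ε) * hC3⟩
    have h11 : Ideal.span {X 2 * (X 0 ^ 3 - X 1 ^ 3), X 0 * (X 1 ^ 3 - X 2 ^ 3),
        X 1 * (X 0 ^ 3 - X 2 ^ 3)} ≤ P ε 11 := by
      refine hgsub _ ?_ ?_ <;>
        rw [show P ε 11 = Ideal.span {X 1 - X 0, X 2 - C ε ^ 2 * X 0} from rfl]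
      · exact Ideal.mem_span_pair.mpr ⟨0,
          -(X 2 ^ 2 + C ε ^ 2 * X 0 * X 2 + C ε * X 0 ^ 2),
          by linear_combination (X 0 ^ 2 * X 2 * C ε + X 0 ^ 3) * hC3⟩
      · exact Ideal.mem_span_pair.mpr ⟨X 1 ^ 2 + X 0 * X 1 + X 0 ^ 2,
          -(X 2 ^ 2 + C ε ^ 2 * X 0 * X 2 + C ε * X 0 ^ 2),
          by linear_combination (X 0 ^ 2 * X 2 * C ε + X 0 ^ 3) * hC3⟩
    refine le_iInf fun i => ?_
    fin_cases i
    · exact h0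
    · exact h1
    · exact h2
    · exact h3
    · exact h4
    · exact h5
    · exact h6
    · exact h7
    · exact h8
    · exact h9
    · exact h10
    · exact h11
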